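/- arXiv:1703.07698 — 7 statements merged into one kernel-verified Lean document; each statement's English description precedes it below -/
import Mathlib

section
/- Let n1, n2, r be natural numbers with r ≤ min(n1, n2), let X be a real n1 × n2 matrix with rank(X) = r, let S be a set of r row indices of X such that the r × n2 submatrix of X formed by the rows in S has rank r, and let Q be an invertible real r × r matrix. Then there exists exactly one pair (Y, Z) with Y a real n1 × r matrix, Z a real r × n2 matrix, X = Y·Z, and the r × r submatrix of Y formed by the rows in S equal to Q. -/
/-!
Let `A` be the block of rows of `X` selected by `e`. Its row space lies in that of `X` and has
the same dimension, so `X = C * A` for some `C`, and `A`, having full row rank, has a right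
inverse; restricting `X = C * A` to the selected rows then forces `C_e = 1`. Hence
`(C * Q, Q⁻¹ * A)` is a factorization of the required shape. Conversely any factorization
`X = Y * Z` with `Y_e = Q` has `A = Q * Z`, so `Z = Q⁻¹ * A` is right invertible and `Y` is
determined by `Y * Z = X`.
-/

namespace Matrix

variable {K : Type*} [Field K] {l m n r : Type*}

theorem mul_right_cancel_of_mul_eq_one {R : Type*} [Semiring R] [Fintype n] [Fintype r]
    [DecidableEq r] {Z : Matrix r n R} {B : Matrix n r R} (hZB : Z * B = 1)
    {Y Y' : Matrix m r R} (h : Y * Z = Y' * Z) : Y = Y' := by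
  simpa only [Matrix.mul_assoc, hZB, Matrix.mul_one] using congrArg (· * B) h

theorem submatrix_mul_id {R : Type*} [Semiring R] [Fintype r] (M : Matrix m r R)
    (N : Matrix r n R) (e : l → m) : (M * N).submatrix e id = M.submatrix e id * N := by
  rw [submatrix_mul M N e id id Function.bijective_id, submatrix_id_id]

theorem exists_mul_eq_one_of_rank_eq_card [Fintype n] [Fintype r] [DecidableEq r]
    {A : Matrix r n K} (h : A.rank = Fintype.card r) : ∃ B : Matrix n r K, A * B = 1 := by
  have hrange : LinearMap.range A.mulVecLin = ⊤ :=
    Submodule.eq_top_of_finrank_eq (h.trans (Module.finrank_fintype_fun_eq_card K).symm)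
  exact mulVec_surjective_iff_exists_right_inverse.1 (LinearMap.range_eq_top.1 hrange)

theorem exists_mul_submatrix_eq_of_rank_submatrix_eq [Fintype m] [Fintype n] [Fintype r]
    {X : Matrix m n K} (e : r → m) (h : (X.submatrix e id).rank = X.rank) :
    ∃ C : Matrix m r K, C * X.submatrix e id = X := by
  set A := X.submatrix e id
  have hspan : Submodule.span K (Set.range A.row) = Submodule.span K (Set.range X.row) :=
    Submodule.eq_of_le_of_finrank_eq (Submodule.span_mono (Set.range_comp_subset_range e X.row))
      (by rw [← rank_eq_finrank_span_row, ← rank_eq_finrank_span_row, h])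
  have hrow (i : m) : ∃ c : r → K, ∑ k, c k • A.row k = X i := by
    rw [← Submodule.mem_span_range_iff_exists_fun, hspan]
    exact Submodule.subset_span ⟨i, rfl⟩
  choose C hC using hrow
  refine ⟨of C, ext fun i j => ?_⟩
  rw [mul_apply_eq_vecMul, vecMul_eq_sum, ← hC i]
  rfl

theorem existsUnique_mul_eq_and_submatrix_eq [Fintype m] [Fintype n] [Fintype r]
    [DecidableEq r] {X : Matrix m n K} (e : r → m)
    (hsub : (X.submatrix e id).rank = X.rank) (hfull : (X.submatrix e id).rank = Fintype.card r)
    {Q : Matrix r r K} (hQ : IsUnit Q) :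
    ∃! YZ : Matrix m r K × Matrix r n K, X = YZ.1 * YZ.2 ∧ YZ.1.submatrix e id = Q := by
  set A := X.submatrix e id
  obtain ⟨C, hCA⟩ := exists_mul_submatrix_eq_of_rank_submatrix_eq e hsub
  obtain ⟨B, hAB⟩ := exists_mul_eq_one_of_rank_eq_card hfull
  have hdet : IsUnit Q.det := (isUnit_iff_isUnit_det Q).1 hQ
  have hCe : C.submatrix e id = 1 := by
    refine mul_right_cancel_of_mul_eq_one hAB ?_
    rw [← submatrix_mul_id, hCA, Matrix.one_mul]
  refine ⟨(C * Q, Q⁻¹ * A), ⟨?_, ?_⟩, ?_⟩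
  · rw [Matrix.mul_assoc, mul_nonsing_inv_cancel_left Q A hdet, hCA]
  · rw [submatrix_mul_id, hCe, Matrix.one_mul]
  rintro ⟨Y, Z⟩ ⟨hXYZ, hYe⟩
  have hZ : Z = Q⁻¹ * A := by
    rw [show A = Q * Z by rw [← hYe, ← submatrix_mul_id, ← hXYZ],
      nonsing_inv_mul_cancel_left Q Z hdet]
  have hZB : Z * (B * Q) = 1 := by
    rw [hZ, Matrix.mul_assoc, ← Matrix.mul_assoc A, hAB, Matrix.one_mul, nonsing_inv_mul Q hdet]
  have hY : Y = C * Q := mul_right_cancel_of_mul_eq_one hZB <| by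
    rw [← hXYZ, hZ, Matrix.mul_assoc, mul_nonsing_inv_cancel_left Q A hdet, hCA]
  rw [hY, hZ]

end Matrix

theorem stmt1_general (n1 n2 r : ℕ)
    (X : Matrix (Fin n1) (Fin n2) ℝ) (e : Fin r ↪ Fin n1)
    (hrank : X.rank = r)
    (hsub : (X.submatrix (⇑e) id).rank = r)
    (Q : Matrix (Fin r) (Fin r) ℝ) (hQ : IsUnit Q) :
    ∃! YZ : Matrix (Fin n1) (Fin r) ℝ × Matrix (Fin r) (Fin n2) ℝ,
      X = YZ.1 * YZ.2 ∧ YZ.1.submatrix (⇑e) id = Q :=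
  Matrix.existsUnique_mul_eq_and_submatrix_eq e (hsub.trans hrank.symm)
    (hsub.trans (Fintype.card_fin r).symm) hQ

/-- Remark 2 (deterministic content): if `X` is an `n1 × n2` real matrix of rank `r`,
`e` enumerates `r` rows of `X` whose submatrix has rank `r`, and `Q` is an invertible
`r × r` matrix, then there is exactly one factorization `X = Y * Z` with the `r × r`
submatrix of `Y` formed by the rows in `e` equal to `Q`. -/
theorem stmt1 (n1 n2 r : ℕ) (hr : r ≤ min n1 n2)
    (X : Matrix (Fin n1) (Fin n2) ℝ) (e : Fin r ↪ Fin n1)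
    (hrank : X.rank = r)
    (hsub : (X.submatrix (⇑e) id).rank = r)
    (Q : Matrix (Fin r) (Fin r) ℝ) (hQ : IsUnit Q) :
    ∃! YZ : Matrix (Fin n1) (Fin r) ℝ × Matrix (Fin r) (Fin n2) ℝ,
      X = YZ.1 * YZ.2 ∧ YZ.1.submatrix (⇑e) id = Q :=
  stmt1_general n1 n2 r X e hrank hsub Q hQ
end

section
/- Let A be the real 4 × 4 matrix with rows (1,2,1,3), (1,2,1,3), (1,2,2,3), (1,2,2,3). There do not exist a real 4 × 2 matrix Y and a real 2 × 4 matrix Z such that A = Y·Z and the top-left 2 × 2 block of Y (rows 1..2, columns 1..2) equals the 2 × 2 identity matrix. -/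
/-- Remark 1 (counterexample): the matrix with rows (1,2,1,3),(1,2,1,3),(1,2,2,3),(1,2,2,3)
admits no factorization `Y * Z` in which the top `2 × 2` block of `Y` is the identity. -/
theorem stmt2 :
    ¬ ∃ (Y : Matrix (Fin 4) (Fin 2) ℝ) (Z : Matrix (Fin 2) (Fin 4) ℝ),
      (!![1, 2, 1, 3; 1, 2, 1, 3; 1, 2, 2, 3; 1, 2, 2, 3] : Matrix (Fin 4) (Fin 4) ℝ)
          = Y * Z ∧
        Y.submatrix (Fin.castLE (show (2 : ℕ) ≤ 4 by norm_num)) id = 1 := by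
  rintro ⟨Y, Z, hA, hI⟩
  have hY00 : Y 0 0 = 1 := by
    have := congrFun (congrFun hI 0) 0; simpa using this
  have hY01 : Y 0 1 = 0 := by
    have := congrFun (congrFun hI 0) 1; simpa using this
  have hY10 : Y 1 0 = 0 := by
    have := congrFun (congrFun hI 1) 0; simpa using this
  have hY11 : Y 1 1 = 1 := by
    have := congrFun (congrFun hI 1) 1; simpa using this
  have e : ∀ i j, (!![1, 2, 1, 3; 1, 2, 1, 3; 1, 2, 2, 3; 1, 2, 2, 3] :
      Matrix (Fin 4) (Fin 4) ℝ) i j = Y i 0 * Z 0 j + Y i 1 * Z 1 j := by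
    intro i j
    rw [hA, Matrix.mul_apply, Fin.sum_univ_two]
  have e00 := e 0 0; have e02 := e 0 2
  have e10 := e 1 0; have e12 := e 1 2
  have e20 := e 2 0; have e22 := e 2 2
  simp [hY00, hY01, hY10, hY11, Matrix.vecHead, Matrix.vecTail] at e00 e02 e10 e12 e20 e22
  -- Z 0 0 = 1, Z 0 2 = 1, Z 1 0 = 1, Z 1 2 = 1
  rw [← e10, ← e00] at e20; rw [← e02, ← e12] at e22
  nlinarith [e20, e22]
end

section
/- Let U and V be real 2 × 2 × 2 tensors (functions {1,2} × {1,2} × {1,2} → ℝ) such that for each of U and V, the first unfolding (the 2 × 4 matrix with rows indexed by x1 and columns indexed by (x2,x3)) has rank at most 1 and the second unfolding (the 4 × 2 matrix with rows indexed by (x1,x2) and columns indexed by x3) has rank at most 1. If U and V agree at the four positions (1,1,1), (2,1,1), (1,2,1), (1,1,2), and U(1,1,1) ≠ 0, then U = V. -/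
open Matrix

lemma rank_le_one_minor {m n : Type*} [Fintype n] [DecidableEq n] (M : Matrix m n ℝ)
    (h : M.rank ≤ 1) (i j : m) (k l : n) : M i k * M j l = M i l * M j k := by
  rw [Matrix.rank, Submodule.finrank_le_one_iff_isPrincipal] at h
  obtain ⟨v, hv⟩ := h
  have colmem : ∀ c : n, M.mulVec (Pi.single c 1) ∈ LinearMap.range M.mulVecLin :=
    fun c => ⟨Pi.single c 1, rfl⟩
  have hk := colmem k
  have hl := colmem l
  rw [hv, Submodule.mem_span_singleton] at hk hl
  obtain ⟨a, ha⟩ := hk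
  obtain ⟨b, hb⟩ := hl
  have hak : ∀ r, M r k = a * v r := by
    intro r
    have := congrFun ha r
    simpa [Matrix.mulVec_single] using this.symm
  have hbl : ∀ r, M r l = b * v r := by
    intro r
    have := congrFun hb r
    simpa [Matrix.mulVec_single] using this.symm
  rw [hak, hak, hbl, hbl]; ring

lemma tensor_eqs (T : Fin 2 → Fin 2 → Fin 2 → ℝ)
    (h1 : (Matrix.of fun (x1 : Fin 2) (p : Fin 2 × Fin 2) => T x1 p.1 p.2).rank ≤ 1)
    (h2 : (Matrix.of fun (p : Fin 2 × Fin 2) (x3 : Fin 2) => T p.1 p.2 x3).rank ≤ 1) :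
    T 0 0 0 * T 1 0 1 = T 0 0 1 * T 1 0 0 ∧
    T 0 0 0 * T 0 1 1 = T 0 0 1 * T 0 1 0 ∧
    T 0 0 0 * T 1 1 0 = T 0 1 0 * T 1 0 0 ∧
    T 0 0 0 * T 0 0 0 * T 1 1 1 = T 0 0 1 * T 0 1 0 * T 1 0 0 := by
  have m1 := fun (i j : Fin 2) (p q : Fin 2 × Fin 2) =>
    rank_le_one_minor _ h1 i j p q
  have m2 := fun (p q : Fin 2 × Fin 2) (k l : Fin 2) =>
    rank_le_one_minor _ h2 p q k l
  simp only [Matrix.of_apply] at m1 m2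
  have e1 := m1 0 1 (0,0) (0,1)
  have e2 := m2 (0,0) (0,1) 0 1
  have e3 := m1 0 1 (0,0) (1,0)
  have e4 := m1 0 1 (0,0) (1,1)
  refine ⟨e1, e2, e3, ?_⟩
  calc T 0 0 0 * T 0 0 0 * T 1 1 1 = T 0 0 0 * (T 0 0 0 * T 1 1 1) := by ring
    _ = T 0 0 0 * (T 0 1 1 * T 1 0 0) := by rw [e4]
    _ = (T 0 0 0 * T 0 1 1) * T 1 0 0 := by ring
    _ = (T 0 0 1 * T 0 1 0) * T 1 0 0 := by rw [e2]

/-- Motivating example (Section II.B), uniqueness: two `2 × 2 × 2` real tensors of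
TT rank `(1,1)` (both unfoldings of rank at most `1`) that agree at the four positions
(1,1,1), (2,1,1), (1,2,1), (1,1,2), with a nonzero entry at (1,1,1), are equal.
(Indices are 0-based in this formalization.) -/
theorem stmt4 (U V : Fin 2 → Fin 2 → Fin 2 → ℝ)
    (hU1 : (Matrix.of fun (x1 : Fin 2) (p : Fin 2 × Fin 2) => U x1 p.1 p.2).rank ≤ 1)
    (hU2 : (Matrix.of fun (p : Fin 2 × Fin 2) (x3 : Fin 2) => U p.1 p.2 x3).rank ≤ 1)
    (hV1 : (Matrix.of fun (x1 : Fin 2) (p : Fin 2 × Fin 2) => V x1 p.1 p.2).rank ≤ 1)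
    (hV2 : (Matrix.of fun (p : Fin 2 × Fin 2) (x3 : Fin 2) => V p.1 p.2 x3).rank ≤ 1)
    (h000 : U 0 0 0 = V 0 0 0) (h100 : U 1 0 0 = V 1 0 0)
    (h010 : U 0 1 0 = V 0 1 0) (h001 : U 0 0 1 = V 0 0 1)
    (hne : U 0 0 0 ≠ 0) :
    U = V := by
  obtain ⟨u1, u2, u3, u4⟩ := tensor_eqs U hU1 hU2
  obtain ⟨v1, v2, v3, v4⟩ := tensor_eqs V hV1 hV2
  simp only [← h000, ← h100, ← h010, ← h001] at v1 v2 v3 v4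
  have ha2 : U 0 0 0 * U 0 0 0 ≠ 0 := mul_ne_zero hne hne
  funext x1 x2 x3
  fin_cases x1 <;> fin_cases x2 <;> fin_cases x3 <;>
    simp only [Fin.isValue] <;>
    [exact h000; exact h001; exact h010;
     exact mul_left_cancel₀ hne (u2.trans v2.symm);
     exact h100;
     exact mul_left_cancel₀ hne (u1.trans v1.symm);
     exact mul_left_cancel₀ hne (u3.trans v3.symm);
     exact mul_left_cancel₀ ha2 (u4.trans v4.symm)]
end

section
/- Let n ≥ 1, r' ≥ 0, and 1 ≤ i ≤ j be integers, and let F_1, …, F_{n−r'} be finite subsets of {1,…,n}^j (the supports of n − r' columns of the j-th unfolding of a sampling pattern), each satisfying |F_c| ≥ r' + 1, such that for every nonempty subset T ⊆ {1,…,n−r'}, the number of distinct values of the i-th coordinate appearing among the elements of ⋃_{c∈T} F_c is at least |T| + r'. Then there exist subsets G_c ⊆ F_c with |G_c| = r' + 1 for every c, such that for every nonempty subset T ⊆ {1,…,n−r'}, the number of distinct values of the i-th coordinate appearing among the elements of ⋃_{c∈T} G_c is at least |T| + r'. -/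
/-!
By Rado's argument, a family of finite sets in which every `t` of them cover at least `t + r`
points can lose an element from any set of size at least `r + 2` without breaking this surplus
condition: if removing `x` and removing `y ≠ x` from `F c` both failed, the two violating
subfamilies `T₁, T₂` (both containing `c`) would contradict submodularity of
`T ↦ |⋃_{d ∈ T} F d|` together with the surplus condition for `T₁ ∪ T₂` and `(T₁ ∩ T₂) \ {c}`.
Removing elements one at a time brings every set down to `r + 1` points.

Counting distinct `i`-th coordinates is the same condition for the images of the sets under the
coordinate projection, and subsets of the images lift to subsets of the same size of the
original sets.
-/

open Finset Function

variable {ι α β : Type*}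

def HasHallSurplus [DecidableEq α] (r : ℕ) (F : ι → Finset α) : Prop :=
  ∀ T : Finset ι, T.Nonempty → #T + r ≤ #(T.biUnion F)

namespace HasHallSurplus

variable [DecidableEq α] {r : ℕ} {F : ι → Finset α}

lemma add_one_le_card (h : HasHallSurplus r F) (c : ι) : r + 1 ≤ #(F c) := by
  simpa [add_comm] using h {c} (singleton_nonempty c)

variable [DecidableEq ι]

lemma biUnion_update_of_notMem {T : Finset ι} {c : ι} (hc : c ∉ T) (s : Finset α) :
    T.biUnion (update F c s) = T.biUnion F :=
  biUnion_congr rfl fun _ hd => update_of_ne (ne_of_mem_of_not_mem hd hc) _ _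

lemma biUnion_update_of_mem {T : Finset ι} {c : ι} (hc : c ∈ T) (s : Finset α) :
    T.biUnion (update F c s) = s ∪ (T.erase c).biUnion F := by
  conv_lhs => rw [← insert_erase hc]
  rw [biUnion_insert, update_self, biUnion_update_of_notMem (notMem_erase c T)]

lemma exists_card_lt_of_not_update (h : HasHallSurplus r F) {c : ι} {s : Finset α}
    (hs : ¬ HasHallSurplus r (update F c s)) :
    ∃ T, c ∈ T ∧ #(s ∪ (T.erase c).biUnion F) < #T + r := by
  simp only [HasHallSurplus, not_forall, not_le] at hs
  obtain ⟨T, hT, hlt⟩ := hs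
  by_cases hc : c ∈ T
  · exact ⟨T, hc, biUnion_update_of_mem hc s ▸ hlt⟩
  · rw [biUnion_update_of_notMem hc] at hlt
    exact absurd (h T hT) (not_le.2 hlt)

theorem exists_erase (h : HasHallSurplus r F) {c : ι} (hc : r + 2 ≤ #(F c)) :
    ∃ x ∈ F c, HasHallSurplus r (update F c ((F c).erase x)) := by
  obtain ⟨x, hx, y, hy, hxy⟩ := one_lt_card.1 (by omega : 1 < #(F c))
  by_contra! hfail
  obtain ⟨T₁, hc₁, hA⟩ := h.exists_card_lt_of_not_update (hfail x hx)
  obtain ⟨T₂, hc₂, hB⟩ := h.exists_card_lt_of_not_update (hfail y hy)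
  set A := (F c).erase x ∪ (T₁.erase c).biUnion F
  set B := (F c).erase y ∪ (T₂.erase c).biUnion F
  have hunion : (T₁ ∪ T₂).biUnion F ⊆ A ∪ B := by
    intro z hz
    simp only [A, B, mem_union, mem_biUnion, mem_erase] at hz ⊢
    grind
  have hinter : ((F c).erase x).erase y ∪ ((T₁ ∩ T₂).erase c).biUnion F ⊆ A ∩ B := by
    intro z hz
    simp only [A, B, mem_union, mem_inter, mem_biUnion, mem_erase] at hz ⊢
    grind
  have hcI : c ∈ T₁ ∩ T₂ := mem_inter.2 ⟨hc₁, hc₂⟩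
  -- When `T₁ ∩ T₂ = {c}` this bound comes from `(F c) \ {x, y}`, not from the surplus condition.
  have hI : #(T₁ ∩ T₂) + r ≤ #(A ∩ B) + 1 := by
    have hcard := card_erase_of_mem hcI
    by_cases hS : ((T₁ ∩ T₂).erase c).Nonempty
    · have := (h _ hS).trans (card_le_card (subset_union_right.trans hinter))
      have := card_pos.2 ⟨c, hcI⟩
      omega
    · rw [not_nonempty_iff_eq_empty] at hS
      have hxy' : #(((F c).erase x).erase y) = #(F c) - 2 := by
        rw [card_erase_of_mem (mem_erase.2 ⟨hxy.symm, hy⟩), card_erase_of_mem hx]; omega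
      have := card_le_card (subset_union_left.trans hinter)
      rw [hS, card_empty] at hcard
      have := card_pos.2 ⟨c, hcI⟩
      omega
  have hU := (h _ ⟨c, mem_union_left _ hc₁⟩).trans (card_le_card hunion)
  have := card_union_add_card_inter A B
  have := card_union_add_card_inter T₁ T₂
  omega

theorem exists_subfamily_card_eq [Fintype ι] (h : HasHallSurplus r F) :
    ∃ G : ι → Finset α, (∀ c, G c ⊆ F c ∧ #(G c) = r + 1) ∧ HasHallSurplus r G := by
  induction hN : ∑ c, #(F c) using Nat.strong_induction_on generalizing F with
  | _ N ih =>
    by_cases hsmall : ∀ c, #(F c) ≤ r + 1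
    · exact ⟨F, fun c => ⟨Subset.rfl, (hsmall c).antisymm (h.add_one_le_card c)⟩, h⟩
    push Not at hsmall
    obtain ⟨c, hc⟩ := hsmall
    obtain ⟨x, hx, h'⟩ := h.exists_erase hc
    have hsub : update F c ((F c).erase x) ≤ F := update_le_self_iff.2 (erase_subset x (F c))
    have hlt : ∑ d, #(update F c ((F c).erase x) d) < N :=
      hN ▸ sum_lt_sum (fun d _ => card_le_card (hsub d))
        ⟨c, mem_univ c, by simpa using card_erase_lt_of_mem hx⟩
    obtain ⟨G, hG, hGs⟩ := ih _ hlt h' rfl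
    exact ⟨G, fun d => ⟨(hG d).1.trans (hsub d), (hG d).2⟩, hGs⟩

end HasHallSurplus

theorem exists_subfamily_card_eq_of_hasHallSurplus_image [Fintype ι] [DecidableEq ι]
    [DecidableEq β] {r : ℕ} {F : ι → Finset α} (π : α → β)
    (h : HasHallSurplus r fun c => (F c).image π) :
    ∃ G : ι → Finset α, (∀ c, G c ⊆ F c ∧ #(G c) = r + 1) ∧
      HasHallSurplus r fun c => (G c).image π := by
  obtain ⟨H, hH, hHs⟩ := h.exists_subfamily_card_eq
  have hlift : ∀ c, ∃ u : Finset α, ↑u ⊆ (F c : Set α) ∧ Set.InjOn π u ∧ u.image π = H c :=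
    fun c => exists_subset_injOn_image_eq_of_surjOn _ _ (by
      simpa [Set.SurjOn, ← coe_image] using (hH c).1)
  choose G hGF hinj himg using hlift
  refine ⟨G, fun c => ⟨coe_subset.1 (hGF c), ?_⟩, by simpa only [himg] using hHs⟩
  rw [← card_image_of_injOn (hinj c), himg, (hH c).2]

/-- Lemma 11 (deterministic): given `n − r'` columns of the `j`-th unfolding of a
sampling pattern, each column `c` identified with its finite set `F c ⊆ {1,…,n}^j` of
observed positions with `|F c| ≥ r' + 1`, such that every nonempty subfamily `T` of
columns sees at least `|T| + r'` distinct values of the `i`-th coordinate, there exist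
subsets `G c ⊆ F c` with `|G c| = r' + 1` enjoying the same property. -/
theorem stmt6 (n r' i j : ℕ) (hi1 : 1 ≤ i) (hij : i ≤ j)
    (F : Fin (n - r') → Finset (Fin j → Fin n))
    (hcov : ∀ T : Finset (Fin (n - r')), T.Nonempty →
      T.card + r' ≤ ((T.biUnion F).image (fun v => v ⟨i - 1, by omega⟩)).card) :
    ∃ G : Fin (n - r') → Finset (Fin j → Fin n),
      (∀ c, G c ⊆ F c ∧ (G c).card = r' + 1) ∧
      ∀ T : Finset (Fin (n - r')), T.Nonempty →
        T.card + r' ≤ ((T.biUnion G).image (fun v => v ⟨i - 1, by omega⟩)).card := by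
  have hsurplus : HasHallSurplus r' fun c => (F c).image (fun v => v ⟨i - 1, by omega⟩) :=
    fun T hT => by simpa only [biUnion_image] using hcov T hT
  simpa only [HasHallSurplus, biUnion_image] using
    exists_subfamily_card_eq_of_hasHallSurplus_image _ hsurplus
end

section
/- Let n, k, r', l be positive integers and ε ∈ (0,1) with r' ≤ n/6 and l > max{9·log(n/ε) + 3·log(k/ε) + 6, 2r'}. Consider n − r' columns, where for each column c the set of its nonzero rows is the image of l independent draws, each uniformly distributed over {1,…,n}, with all draws independent across columns. Then with probability at least 1 − ε/k, for every nonempty subset T of these n − r' columns, the number of rows of {1,…,n} that are nonzero in at least one column of T is at least |T| + r'. -/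
/-!
If a nonempty set `T` of `t` columns meets fewer than `t + r'` rows, all `l * t` draws of these
columns land in some set `S` of `s = t + r' - 1` rows, which has probability `(s / n) ^ (l * t)`.
A union bound over `(T, S)` bounds the failure probability by
`∑ₜ C(m, t) C(n, s) (s / n) ^ (l * t)` (`m = n - r'`), and each term is at most
`ε / (4k) * (2⁻⁽ᵗ⁻¹⁾ + 2⁻⁽ᵐ⁻ᵗ⁾)`, so the sum is at most `ε / k`.
While `2s ≤ n`, the bound `C(n, s) ≤ (e n / s) ^ s` is beaten by `(s / n) ^ (l * t)` with
`n / s ≥ 2`; for `t = 1` this needs `n / s = n / r' ≥ 6` and `l > 2r'`. When `2s > n`, one counts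
complements instead: `C(m, t) C(n, s) ≤ n ^ (2(n - s) - 1)`, whereas
`(s / n) ^ (l * t) ≤ exp (-l t (n - s) / n)` and `t > n / 3`.
-/

open Finset Real

section Counting

variable {ι κ α : Type*} [Fintype κ] [DecidableEq α]

def HasRowSurplus (r : ℕ) (ω : ι → κ → α) : Prop :=
  ∀ T : Finset ι, T.Nonempty → #T + r ≤ #(T.biUnion fun c => univ.image (ω c))

variable [Fintype ι] [Fintype α]

lemma exists_subset_of_not_hasRowSurplus {r : ℕ} (hr : Fintype.card ι + r ≤ Fintype.card α)
    {ω : ι → κ → α} (hω : ¬ HasRowSurplus r ω) :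
    ∃ j < Fintype.card ι, ∃ T : Finset ι, #T = j + 1 ∧ ∃ S : Finset α, #S = j + r ∧
      ∀ c ∈ T, ∀ i, ω c i ∈ S := by
  simp only [HasRowSurplus, not_forall, not_le] at hω
  obtain ⟨T, hT, hlt⟩ := hω
  have hT₀ := hT.card_pos
  have hTι := card_le_univ T
  obtain ⟨S, hsub, hS⟩ := exists_superset_card_eq
    (s := T.biUnion fun c => univ.image (ω c)) (n := #T - 1 + r) (by omega) (by omega)
  refine ⟨#T - 1, by omega, T, by omega, S, hS,
    fun c hc i => hsub (mem_biUnion.2 ⟨c, hc, mem_image_of_mem _ (mem_univ i)⟩)⟩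

variable [DecidableEq ι] [DecidableEq κ]

lemma card_filter_forall_mem (T : Finset ι) (S : Finset α) :
    #{ω : ι → κ → α | ∀ c ∈ T, ∀ i, ω c i ∈ S} =
      #S ^ (Fintype.card κ * #T) *
        Fintype.card α ^ (Fintype.card κ * (Fintype.card ι - #T)) := by
  have hA : ({ω : ι → κ → α | ∀ c ∈ T, ∀ i, ω c i ∈ S} : Finset _) =
      Fintype.piFinset fun c => Fintype.piFinset fun (_ : κ) => if c ∈ T then S else univ := by
    ext ω
    simp only [mem_filter, mem_univ, true_and, Fintype.mem_piFinset]
    refine ⟨fun h c i => ?_, fun h c hc i => by simpa [hc] using h c i⟩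
    split_ifs with hc
    · exact h c hc i
    · exact mem_univ _
  rw [hA, Fintype.card_piFinset]
  simp only [Fintype.card_piFinset, prod_const, card_univ, apply_ite card, prod_pow, prod_ite,
    filter_mem_eq_inter, univ_inter, filter_notMem_eq_sdiff, card_univ_sdiff]
  ring

open scoped Classical in
lemma card_filter_not_hasRowSurplus_le {r : ℕ} (hr : Fintype.card ι + r ≤ Fintype.card α) :
    #{ω : ι → κ → α | ¬ HasRowSurplus r ω} ≤
      ∑ j ∈ range (Fintype.card ι), (Fintype.card ι).choose (j + 1) *
        ((Fintype.card α).choose (j + r) * ((j + r) ^ (Fintype.card κ * (j + 1)) *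
          Fintype.card α ^ (Fintype.card κ * (Fintype.card ι - (j + 1))))) := by
  set m := Fintype.card ι
  calc #{ω : ι → κ → α | ¬ HasRowSurplus r ω}
      ≤ #((range m).biUnion fun j => (powersetCard (j + 1) univ).biUnion fun T =>
          (powersetCard (j + r) univ).biUnion fun S =>
            ({ω : ι → κ → α | ∀ c ∈ T, ∀ i, ω c i ∈ S} : Finset _)) := by
        refine card_le_card fun ω hω => ?_
        obtain ⟨j, hj, T, hT, S, hS, hTS⟩ :=
          exists_subset_of_not_hasRowSurplus hr (mem_filter.1 hω).2
        simp only [mem_biUnion, mem_range, mem_powersetCard_univ, mem_filter_univ]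
        exact ⟨j, hj, T, hT, S, hS, hTS⟩
    _ ≤ ∑ j ∈ range m, ∑ T ∈ powersetCard (j + 1) univ,
          ∑ S ∈ powersetCard (j + r) (univ : Finset α),
            #({ω : ι → κ → α | ∀ c ∈ T, ∀ i, ω c i ∈ S} : Finset _) :=
        card_biUnion_le.trans <| sum_le_sum fun _ _ => card_biUnion_le.trans <|
          sum_le_sum fun _ _ => card_biUnion_le
    _ = _ := by
        refine sum_congr rfl fun j _ => ?_
        rw [sum_congr rfl fun T hT => sum_congr rfl fun S hS => by
          rw [card_filter_forall_mem, (mem_powersetCard_univ.1 hT), (mem_powersetCard_univ.1 hS)]]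
        simp only [sum_const, card_powersetCard, card_univ, smul_eq_mul]
        rfl

open scoped Classical in
lemma one_sub_sum_le_card_hasRowSurplus_div [Nonempty α] {r : ℕ}
    (hr : Fintype.card ι + r ≤ Fintype.card α) :
    1 - ∑ j ∈ range (Fintype.card ι), ((Fintype.card ι).choose (j + 1) : ℝ) *
        (Fintype.card α).choose (j + r) *
        (((j + r : ℕ) : ℝ) / Fintype.card α) ^ (Fintype.card κ * (j + 1)) ≤
      Nat.card {ω : ι → κ → α // HasRowSurplus r ω} / Fintype.card (ι → κ → α) := by
  set m := Fintype.card ι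
  set n := Fintype.card α
  set l := Fintype.card κ
  have hn : (0 : ℝ) < n := by exact_mod_cast Fintype.card_pos
  have hΩ : (Fintype.card (ι → κ → α) : ℝ) = (n : ℝ) ^ (l * m) := by
    rw [Fintype.card_fun, Fintype.card_fun, pow_mul]; push_cast; rfl
  have hsplit : (#{ω : ι → κ → α | HasRowSurplus r ω} : ℝ) +
      #{ω : ι → κ → α | ¬ HasRowSurplus r ω} = n ^ (l * m) := by
    rw [← hΩ, ← card_univ]
    exact_mod_cast card_filter_add_card_filter_not _
  have hbad : (#{ω : ι → κ → α | ¬ HasRowSurplus r ω} : ℝ) ≤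
      (∑ j ∈ range m, (m.choose (j + 1) : ℝ) * n.choose (j + r) *
        (((j + r : ℕ) : ℝ) / n) ^ (l * (j + 1))) * n ^ (l * m) := by
    refine (Nat.cast_le.2 (card_filter_not_hasRowSurplus_le hr)).trans_eq ?_
    simp only [Nat.cast_sum, Nat.cast_mul, Nat.cast_pow]
    rw [sum_mul]
    refine sum_congr rfl fun j hj => ?_
    have hjm : l * m = l * (j + 1) + l * (m - (j + 1)) := by
      rw [← mul_add]; congr 1; have := mem_range.1 hj; omega
    rw [hjm, pow_add, div_pow]
    field_simp
    rfl
  rw [Nat.card_eq_fintype_card, Fintype.card_subtype, hΩ, le_div_iff₀ (by positivity)]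
  linarith

end Counting

lemma Nat.choose_le_exp_one_mul_div_pow (n s : ℕ) :
    (n.choose s : ℝ) ≤ (exp 1 * (n / s)) ^ s := by
  rcases s.eq_zero_or_pos with rfl | hs
  · simp
  have hs' : (0 : ℝ) < s := by exact_mod_cast hs
  calc (n.choose s : ℝ) ≤ n ^ s / s.factorial := Nat.choose_le_pow_div s n
    _ = (n / s) ^ s * ((s : ℝ) ^ s / s.factorial) := by
          rw [div_pow, div_mul_div_cancel₀ (by positivity)]
    _ ≤ (n / s) ^ s * exp s := by gcongr; exact pow_div_factorial_le_exp _ hs'.le s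
    _ = (exp 1 * (n / s)) ^ s := by rw [mul_pow, ← exp_nat_mul, mul_one, mul_comm]

lemma exp_log_sub_mul_log_two {δ : ℝ} (hδ : 0 < δ) (i : ℕ) :
    exp (log δ - (i + 2) * log 2) = δ / 4 * (1 / 2) ^ i := by
  rw [exp_sub, exp_log hδ, show ((i : ℝ) + 2) = ((i + 2 : ℕ) : ℝ) by push_cast; ring,
    exp_nat_mul, exp_log two_pos, pow_add, one_div, inv_pow]
  ring

lemma choose_mul_choose_mul_div_pow_le_exp {m n s t l : ℕ} (hmn : m ≤ n) (hs : 0 < s)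
    (hsn : s ≤ n) :
    (m.choose t : ℝ) * n.choose s * ((s : ℝ) / n) ^ (l * t) ≤
      exp (t * log n + s * (1 + log (n / s)) - l * t * log (n / s)) := by
  have hs' : (0 : ℝ) < s := by exact_mod_cast hs
  have hn : (0 : ℝ) < n := by exact_mod_cast hs.trans_le hsn
  have hnt : exp (t * log n) = (n : ℝ) ^ t := by rw [exp_nat_mul, exp_log hn]
  have hns : exp (s * (1 + log (n / s))) = (exp 1 * (n / s)) ^ s := by
    rw [exp_nat_mul, exp_add, exp_log (by positivity)]
  have hsn : exp (-(l * t * log (n / s))) = ((s : ℝ) / n) ^ (l * t) := by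
    rw [show -(l * t * log (n / s)) = ((l * t : ℕ) : ℝ) * -log (n / s) by push_cast; ring,
      exp_nat_mul, exp_neg, exp_log (by positivity), inv_div]
  rw [sub_eq_add_neg, exp_add, exp_add, hnt, hns, hsn]
  gcongr
  · calc (m.choose t : ℝ) ≤ (m ^ t : ℕ) := Nat.cast_le.2 (Nat.choose_le_pow m t)
      _ ≤ (n : ℝ) ^ t := by push_cast; gcongr
  · exact Nat.choose_le_exp_one_mul_div_pow n s

lemma choose_add_mul_choose_mul_div_pow_le_exp {t d s l n : ℕ} (hn : s + (d + 1) = n)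
    (htd : t + d ≤ n) (h3t : n ≤ 3 * t) :
    ((t + d).choose t : ℝ) * n.choose s * ((s : ℝ) / n) ^ (l * t) ≤
      exp ((2 * d + 1) * log n - l * (d + 1) / 3) := by
  have hn0 : (0 : ℝ) < n := by exact_mod_cast (show 0 < n by omega)
  have hchoose_td : ((t + d).choose t : ℝ) ≤ (n : ℝ) ^ d := by
    rw [Nat.choose_symm_add]
    exact_mod_cast (Nat.choose_le_pow _ _).trans (Nat.pow_le_pow_left htd d)
  have hchoose_n : (n.choose s : ℝ) ≤ (n : ℝ) ^ (d + 1) := by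
    rw [← hn, Nat.choose_symm_add]
    exact_mod_cast Nat.choose_le_pow _ _
  have hratio : (s : ℝ) / n ≤ exp (-((d + 1) / n)) := by
    have hs : (s : ℝ) = n - (d + 1) := by rw [← hn]; push_cast; ring
    calc (s : ℝ) / n = 1 - (d + 1) / n := by rw [hs, sub_div, div_self hn0.ne']
      _ ≤ exp (-((d + 1) / n)) := one_sub_le_exp_neg _
  have hpow : ((s : ℝ) / n) ^ (l * t) ≤ exp (-(l * (d + 1) / 3)) := by
    calc ((s : ℝ) / n) ^ (l * t) ≤ exp (-((d + 1) / n)) ^ (l * t) := by gcongr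
      _ = exp (-(l * (d + 1) * (t / n))) := by
          rw [← exp_nat_mul]; push_cast; ring_nf
      _ ≤ exp (-(l * (d + 1) / 3)) := by
          rw [div_eq_mul_one_div (_ * _)]
          gcongr exp (-(_ * ?_))
          rw [div_le_div_iff₀ three_pos hn0]
          exact_mod_cast (by omega : 1 * n ≤ t * 3)
  calc ((t + d).choose t : ℝ) * n.choose s * ((s : ℝ) / n) ^ (l * t)
      ≤ n ^ d * n ^ (d + 1) * exp (-(l * (d + 1) / 3)) := by gcongr
    _ = exp ((2 * d + 1) * log n - l * (d + 1) / 3) := by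
        have hcast : (2 * d + 1 : ℝ) = ((d + (d + 1) : ℕ) : ℝ) := by push_cast; ring
        rw [← pow_add, sub_eq_add_neg, exp_add, hcast, exp_nat_mul, exp_log hn0]

lemma choose_one_mul_choose_mul_div_pow_le {m n r l : ℕ} {δ : ℝ} (hδ : 0 < δ)
    (hδ1 : δ ≤ 1) (hr : 0 < r) (hrn : 6 * r ≤ n) (hmn : m ≤ n) (hlr : 2 * r < l)
    (hl : 9 * log n - 3 * log δ + 6 ≤ l) :
    (m.choose 1 : ℝ) * n.choose r * ((r : ℝ) / n) ^ (l * 1) ≤ δ / 4 := by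
  have hr' : (0 : ℝ) < r := by exact_mod_cast hr
  have hN : 0 ≤ log n := log_natCast_nonneg n
  have hδ' : log δ ≤ 0 := log_nonpos hδ.le hδ1
  have hc := log_two_gt_d9
  have hc' := log_two_lt_d9
  have hlr' : 2 * (r : ℝ) + 1 ≤ l := by exact_mod_cast hlr
  have hy : 1 + log 2 ≤ log (n / r) := by
    have h3 : 1 ≤ log 3 := by
      rw [le_log_iff_exp_le three_pos]
      linarith [exp_one_lt_d9]
    calc 1 + log 2 ≤ log 3 + log 2 := by linarith
      _ = log 6 := by rw [← log_mul three_ne_zero two_ne_zero]; norm_num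
      _ ≤ log (n / r) := by
          gcongr
          rw [le_div_iff₀ hr']
          exact_mod_cast (by omega : 6 * r ≤ n)
  calc (m.choose 1 : ℝ) * n.choose r * ((r : ℝ) / n) ^ (l * 1)
      ≤ exp ((1 : ℕ) * log n + r * (1 + log (n / r)) - l * (1 : ℕ) * log (n / r)) :=
        choose_mul_choose_mul_div_pow_le_exp hmn hr (by omega)
    _ ≤ exp (log δ - (0 + 2) * log 2) := by
        refine exp_le_exp.2 ?_
        push_cast
        nlinarith [mul_nonneg (by linarith : (0 : ℝ) ≤ l - r)
          (by linarith : 0 ≤ log (n / r) - 1 - log 2)]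
    _ = δ / 4 := by simpa using exp_log_sub_mul_log_two hδ 0

lemma choose_mul_choose_mul_div_pow_le_of_two_mul_le {m n r l j : ℕ} {δ : ℝ} (hδ : 0 < δ)
    (hδ1 : δ ≤ 1) (hmn : m ≤ n) (hj : 0 < j) (hjr : 2 * (j + r) ≤ n) (hlr : 2 * r < l)
    (hl : 9 * log n - 3 * log δ + 6 ≤ l) :
    (m.choose (j + 1) : ℝ) * n.choose (j + r) * (((j + r : ℕ) : ℝ) / n) ^ (l * (j + 1)) ≤
      δ / 4 * (1 / 2) ^ j := by
  have hs : (0 : ℝ) < (j + r : ℕ) := by exact_mod_cast (show 0 < j + r by omega)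
  have hN : 0 ≤ log n := log_natCast_nonneg n
  have hδ' : log δ ≤ 0 := log_nonpos hδ.le hδ1
  have hc := log_two_gt_d9
  have hc' := log_two_lt_d9
  have hlr' : 2 * (r : ℝ) + 1 ≤ l := by exact_mod_cast hlr
  have hj' : (1 : ℝ) ≤ j := by exact_mod_cast hj
  have hy : log 2 ≤ log (n / (j + r : ℕ)) := by
    gcongr
    rw [le_div_iff₀ hs]
    exact_mod_cast (by omega : 2 * (j + r) ≤ n)
  set y := log (n / (j + r : ℕ))
  calc (m.choose (j + 1) : ℝ) * n.choose (j + r) * (((j + r : ℕ) : ℝ) / n) ^ (l * (j + 1))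
      ≤ exp ((j + 1 : ℕ) * log n + (j + r : ℕ) * (1 + y) - l * (j + 1 : ℕ) * y) :=
        choose_mul_choose_mul_div_pow_le_exp hmn (by omega) (by omega)
    _ ≤ exp (log δ - (j + 2) * log 2) := by
        refine exp_le_exp.2 ?_
        push_cast
        have hdecr : (j + r) * (1 + y) - l * (j + 1) * y ≤
            (j + r) * (1 + log 2) - l * (j + 1) * log 2 := by
          nlinarith [mul_nonneg (by nlinarith : (0 : ℝ) ≤ l * (j + 1) - (j + r))
            (by linarith : 0 ≤ y - log 2)]
        have hj1 : (0 : ℝ) ≤ j - 1 := by linarith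
        nlinarith [mul_nonneg hj1 (by linarith : (0 : ℝ) ≤ l - 9 * log n + 3 * log δ - 6),
          mul_nonneg hj1 hN, mul_nonneg hj1 (by linarith : (0 : ℝ) ≤ -log δ)]
    _ = δ / 4 * (1 / 2) ^ j := exp_log_sub_mul_log_two hδ j

lemma choose_mul_choose_mul_div_pow_le_of_lt_two_mul {n r l j d : ℕ} {δ : ℝ} (hδ : 0 < δ)
    (hδ1 : δ ≤ 1) (hrn : 6 * r ≤ n) (hn : j + 1 + d + r = n) (hjr : n < 2 * (j + r))
    (hl : 9 * log n - 3 * log δ + 6 ≤ l) :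
    ((j + 1 + d).choose (j + 1) : ℝ) * n.choose (j + r) *
        (((j + r : ℕ) : ℝ) / n) ^ (l * (j + 1)) ≤
      δ / 4 * (1 / 2) ^ d := by
  have hN : 0 ≤ log n := log_natCast_nonneg n
  have hδ' : log δ ≤ 0 := log_nonpos hδ.le hδ1
  have hc' := log_two_lt_d9
  have hd : (0 : ℝ) ≤ d := d.cast_nonneg
  calc ((j + 1 + d).choose (j + 1) : ℝ) * n.choose (j + r) *
        (((j + r : ℕ) : ℝ) / n) ^ (l * (j + 1))
      ≤ exp ((2 * d + 1) * log n - l * (d + 1) / 3) :=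
        choose_add_mul_choose_mul_div_pow_le_exp (by omega) (by omega) (by omega)
    _ ≤ exp (log δ - (d + 2) * log 2) := by
        refine exp_le_exp.2 ?_
        nlinarith [mul_nonneg hd (by linarith : (0 : ℝ) ≤ l - 9 * log n + 3 * log δ - 6),
          mul_nonneg hd hN, mul_nonneg hd (by linarith : (0 : ℝ) ≤ -log δ)]
    _ = δ / 4 * (1 / 2) ^ d := exp_log_sub_mul_log_two hδ d

lemma choose_mul_choose_mul_div_pow_le {n r l j d : ℕ} {δ : ℝ} (hδ : 0 < δ) (hδ1 : δ ≤ 1)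
    (hr : 0 < r) (hrn : 6 * r ≤ n) (hn : j + 1 + d + r = n) (hlr : 2 * r < l)
    (hl : 9 * log n - 3 * log δ + 6 ≤ l) :
    ((j + 1 + d).choose (j + 1) : ℝ) * n.choose (j + r) *
        (((j + r : ℕ) : ℝ) / n) ^ (l * (j + 1)) ≤
      δ / 4 * ((1 / 2) ^ j + (1 / 2) ^ d) := by
  have hj : 0 ≤ δ / 4 * (1 / 2 : ℝ) ^ j := by positivity
  have hd : 0 ≤ δ / 4 * (1 / 2 : ℝ) ^ d := by positivity
  rw [mul_add (δ / 4)]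
  rcases lt_or_ge n (2 * (j + r)) with hjr | hjr
  · linarith [choose_mul_choose_mul_div_pow_le_of_lt_two_mul hδ hδ1 hrn hn hjr hl]
  rcases j.eq_zero_or_pos with rfl | hj₀
  · have := choose_one_mul_choose_mul_div_pow_le (m := 0 + 1 + d) hδ hδ1 hr hrn (by omega) hlr hl
    simp only [zero_add, mul_one] at this ⊢
    linarith
  · linarith [choose_mul_choose_mul_div_pow_le_of_two_mul_le (m := j + 1 + d) hδ hδ1 (by omega)
      hj₀ hjr hlr hl]

lemma sum_choose_mul_choose_mul_div_pow_le {m n r l : ℕ} {δ : ℝ} (hδ : 0 < δ)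
    (hδ1 : δ ≤ 1) (hr : 0 < r) (hrn : 6 * r ≤ n) (hm : m + r = n) (hlr : 2 * r < l)
    (hl : 9 * log n - 3 * log δ + 6 ≤ l) :
    ∑ j ∈ range m, (m.choose (j + 1) : ℝ) * n.choose (j + r) *
      (((j + r : ℕ) : ℝ) / n) ^ (l * (j + 1)) ≤ δ := by
  calc ∑ j ∈ range m, (m.choose (j + 1) : ℝ) * n.choose (j + r) *
        (((j + r : ℕ) : ℝ) / n) ^ (l * (j + 1))
      ≤ ∑ j ∈ range m, δ / 4 * ((1 / 2) ^ j + (1 / 2) ^ (m - 1 - j)) := by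
        refine sum_le_sum fun j hj => ?_
        have hjm : j + 1 + (m - 1 - j) = m := by have := mem_range.1 hj; omega
        rw [← hjm] at hm
        simpa only [hjm] using choose_mul_choose_mul_div_pow_le hδ hδ1 hr hrn hm hlr hl
    _ = δ / 4 * (2 * ∑ j ∈ range m, (1 / 2 : ℝ) ^ j) := by
        rw [← mul_sum, sum_add_distrib, sum_range_reflect (fun j => (1 / 2 : ℝ) ^ j), two_mul]
    _ ≤ δ / 4 * (2 * 2) := by gcongr; exact sum_geometric_two_le m
    _ = δ := by ring

theorem stmt8_general (n k r' l : ℕ) (hk : 0 < k) (hr'0 : 0 < r')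
    (ε : ℝ) (hε0 : 0 < ε) (hε1 : ε < 1)
    (hr'n : (r' : ℝ) ≤ (n : ℝ) / 6)
    (hlb : (l : ℝ) > max (9 * Real.log (n / ε) + 3 * Real.log (k / ε) + 6) (2 * r')) :
    1 - ε / k ≤
      (Nat.card {ω : Fin (n - r') → Fin l → Fin n //
          ∀ T : Finset (Fin (n - r')), T.Nonempty →
            T.card + r' ≤ (T.biUnion (fun c => Finset.univ.image (ω c))).card} : ℝ) /
        (Fintype.card (Fin (n - r') → Fin l → Fin n) : ℝ) := by
  have hrn : 6 * r' ≤ n := by exact_mod_cast (by linarith : (6 * r' : ℝ) ≤ n)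
  have hlr : 2 * r' < l := by exact_mod_cast (le_max_right _ _).trans_lt hlb
  have hk' : (1 : ℝ) ≤ k := by exact_mod_cast hk
  have hδ : 0 < ε / k := by positivity
  have hδ1 : ε / k ≤ 1 := div_le_one_of_le₀ (by linarith) (by positivity)
  have hn : 0 < n := by omega
  have hl : 9 * log n - 3 * log (ε / k) + 6 ≤ l := by
    have hlog : log n ≤ log (n / ε) :=
      log_le_log (by positivity) (le_div_self (by positivity) hε0 hε1.le)
    rw [← neg_neg (log (ε / k)), ← log_inv, inv_div]
    linarith [(le_max_left _ _).trans_lt hlb]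
  have : NeZero n := ⟨hn.ne'⟩
  have hsurplus := one_sub_sum_le_card_hasRowSurplus_div (ι := Fin (n - r')) (κ := Fin l)
    (α := Fin n) (r := r') (by simp only [Fintype.card_fin]; omega)
  simp only [Fintype.card_fin] at hsurplus
  exact (sub_le_sub_left (sum_choose_mul_choose_mul_div_pow_le hδ hδ1 hr'0 hrn (by omega) hlr hl)
    1).trans hsurplus

/-- Lemma 8: consider `n − r'` columns, where the set of nonzero rows of column `c` is
the image of `l` i.i.d. draws uniform on `{1,…,n}`, independently across columns
(modelled by the uniform counting probability on the outcome space
`Fin (n-r') → Fin l → Fin n`). If `r' ≤ n/6` and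
`l > max{9 log(n/ε) + 3 log(k/ε) + 6, 2r'}`, then with probability at least `1 − ε/k`
every nonempty subfamily `T` of columns has at least `|T| + r'` distinct nonzero rows. -/
theorem stmt8 (n k r' l : ℕ) (hn : 0 < n) (hk : 0 < k) (hr'0 : 0 < r') (hl0 : 0 < l)
    (ε : ℝ) (hε0 : 0 < ε) (hε1 : ε < 1)
    (hr'n : (r' : ℝ) ≤ (n : ℝ) / 6)
    (hlb : (l : ℝ) > max (9 * Real.log (n / ε) + 3 * Real.log (k / ε) + 6) (2 * r')) :
    1 - ε / k ≤
      (Nat.card {ω : Fin (n - r') → Fin l → Fin n //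
          ∀ T : Finset (Fin (n - r')), T.Nonempty →
            T.card + r' ≤ (T.biUnion (fun c => Finset.univ.image (ω c))).card} : ℝ) /
        (Fintype.card (Fin (n - r') → Fin l → Fin n) : ℝ) :=
  stmt8_general n k r' l hk hr'0 ε hε0 hε1 hr'n hlb
end

section
/- Let d ≥ 2, fix j ∈ {1,…,d−1} and i ∈ {1,…,j}, let r0 = rd = 1 and r1,…,r_{d−1} be positive integers, and let n, r'_i, r, l be positive integers and ε ∈ (0,1) satisfying: r'_i ≤ n/6, n > max{200, Σ_{k=1}^{d−1} r_{k−1}·r_k}, r ≤ Σ_{k=1}^{d−1} r_{k−1}·r_k, and l > max{27·log(n/ε) + 9·log(2r/ε) + 18, 6·r'_i}. Consider n − r'_i columns of the j-th unfolding of a random sampling pattern: for each column, the set of observed positions is the image of l independent draws, each uniformly distributed over the column's n^j cells {1,…,n}^j, with draws independent across columns. Then with probability at least 1 − ε/r, for every nonempty subset T of these n − r'_i columns, the number of distinct values of the i-th coordinate appearing among the observed positions of the columns in T is at least |T| + r'_i. -/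
/-!
Union bound. If some nonempty family `T` of `t` columns sees at most `s = t + r' - 1` values of
the coordinate, then all `l t` draws of those columns land in one set `S` of `s` values, an event
of probability `(s / n) ^ (l t)`. Summing over `T` and `S`, the failure probability is at most
`∑ₜ C(n - r', t) C(n, s) (s / n) ^ (l t)`, and every term is at most `n² e^(3/2 - l/4)`:
* if `12 t < 5 n`, then `s / n ≤ 7/12 ≤ e^(-1/2)` and `C(n, s) (s / n) ^ s ≤ e^s`;
* if `12 t ≥ 5 n`, pass to complements: `C(n - r', t) C(n, s) ≤ n^(2(n - s))` and
  `(s / n) ^ (l t) = (1 - (n - s) / n) ^ (l t) ≤ e^(-5 l (n - s) / 12)`.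
There are at most `n` terms, and the lower bound on `l` gives `n³ r e^(3/2 - l/4) ≤ ε`.
-/

open Finset Real

lemma Fintype.dens_piFinset {ι : Type*} [Fintype ι] [DecidableEq ι] {α : ι → Type*}
    [∀ i, Fintype (α i)] (s : ∀ i, Finset (α i)) :
    (piFinset s).dens = ∏ i, (s i).dens := by
  simp only [dens, card_piFinset, card_pi, Nat.cast_prod, prod_div_distrib]

lemma one_sub_le_card_subtype_div_card {γ : Type*} [Fintype γ] [Nonempty γ] (P : γ → Prop)
    [DecidablePred P] {x : ℝ} (h : ((univ.filter fun a => ¬ P a).dens : ℝ) ≤ x) :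
    1 - x ≤ (Nat.card {a // P a} : ℝ) / Fintype.card γ := by
  have hsplit : ((univ.filter P).dens : ℝ) + (univ.filter fun a => ¬ P a).dens = 1 := by
    have := dens_filter_add_dens_filter_not_eq_dens (s := univ) P
    rw [dens_univ] at this
    exact_mod_cast this
  rw [Nat.card_eq_fintype_card, Fintype.card_subtype, ← nnratCast_dens]
  linarith

section Sampling

variable {κ ι α β : Type*} [Fintype ι] [Fintype β] [DecidableEq β]

/-- Its cardinality is the paper's `m_i` for the columns `T` when `a` is the `i`-th coordinate. -/
def observedCoords [DecidableEq (α → β)] (ω : κ → ι → α → β) (T : Finset κ)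
    (a : α) : Finset β :=
  (T.biUnion fun c => univ.image (ω c)).image fun v => v a

lemma exists_card_eq_forall_apply_mem_of_card_observedCoords_le [DecidableEq (α → β)]
    (ω : κ → ι → α → β) (T : Finset κ) (a : α) {m : ℕ}
    (hT : (observedCoords ω T a).card ≤ m) (hm : m ≤ Fintype.card β) :
    ∃ S : Finset β, S.card = m ∧ ∀ c ∈ T, ∀ k, ω c k a ∈ S := by
  obtain ⟨S, hseen, -, hS⟩ :=
    exists_subsuperset_card_eq (subset_univ _) hT (by rwa [card_univ])
  refine ⟨S, hS, fun c hc k => hseen ?_⟩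
  exact mem_image_of_mem _ (mem_biUnion.2 ⟨c, hc, mem_image_of_mem _ (mem_univ k)⟩)

variable [Fintype κ] [Fintype α] [DecidableEq κ] [DecidableEq ι] [DecidableEq α]

lemma Finset.dens_filter_forall_mem [Nonempty β] (T : Finset α) (B : Finset β) :
    (univ.filter fun f : α → β => ∀ a ∈ T, f a ∈ B).dens = B.dens ^ T.card := by
  have hpi : (univ.filter fun f : α → β => ∀ a ∈ T, f a ∈ B) =
      Fintype.piFinset fun a => if a ∈ T then B else univ := by
    ext f
    simp only [mem_filter, mem_univ, true_and, Fintype.mem_piFinset]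
    refine ⟨fun h a => ?_, fun h a ha => by simpa [ha] using h a⟩
    split_ifs with ha
    exacts [h a ha, mem_univ _]
  rw [hpi, Fintype.dens_piFinset]
  simp only [apply_ite dens, dens_univ, prod_ite_mem, univ_inter, prod_const]

lemma Finset.dens_filter_apply_mem [Nonempty β] (a : α) (B : Finset β) :
    (univ.filter fun f : α → β => f a ∈ B).dens = B.dens := by
  simpa using dens_filter_forall_mem {a} B

lemma dens_filter_forall_forall_apply_mem [Nonempty β] (T : Finset κ) (a : α) (S : Finset β) :
    (univ.filter fun ω : κ → ι → α → β => ∀ c ∈ T, ∀ k, ω c k a ∈ S).dens =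
      S.dens ^ (Fintype.card ι * T.card) := by
  have hcell := dens_filter_apply_mem a S
  have hcol := dens_filter_forall_mem (α := ι) univ (univ.filter fun v : α → β => v a ∈ S)
  have hall := dens_filter_forall_mem T
    (univ.filter fun g : ι → α → β =>
      ∀ k ∈ univ, g k ∈ univ.filter fun v : α → β => v a ∈ S)
  simp only [mem_filter, mem_univ, true_and, forall_const] at hcol hall
  rw [hall, hcol, hcell, card_univ, pow_mul]

lemma dens_filter_not_forall_card_add_le_card_observedCoords_le [DecidableEq (α → β)]
    [Nonempty β] (a : α) (r : ℕ) (hr : Fintype.card κ + r ≤ Fintype.card β + 1) :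
    (univ.filter fun ω : κ → ι → α → β =>
        ¬ ∀ T : Finset κ, T.Nonempty → T.card + r ≤ (observedCoords ω T a).card).dens ≤
      ∑ t ∈ Icc 1 (Fintype.card κ),
        ((Fintype.card κ).choose t * (Fintype.card β).choose (t + r - 1) : ℚ≥0) *
          (((t + r - 1 : ℕ) : ℚ≥0) / Fintype.card β) ^ (Fintype.card ι * t) := by
  set event := fun (T : Finset κ) (S : Finset β) =>
    univ.filter fun ω : κ → ι → α → β => ∀ c ∈ T, ∀ k, ω c k a ∈ S
  have hcover : (univ.filter fun ω : κ → ι → α → β =>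
        ¬ ∀ T : Finset κ, T.Nonempty → T.card + r ≤ (observedCoords ω T a).card) ⊆
      (Icc 1 (Fintype.card κ)).biUnion fun t => (powersetCard t univ).biUnion fun T =>
        (powersetCard (t + r - 1) univ).biUnion fun S => event T S := by
    intro ω hω
    simp only [mem_filter, mem_univ, true_and, not_forall, not_le] at hω
    obtain ⟨T, hT, hlt⟩ := hω
    have hTκ := T.card_le_univ
    obtain ⟨S, hS, hTS⟩ := exists_card_eq_forall_apply_mem_of_card_observedCoords_le ω T a
      (m := T.card + r - 1) (by omega) (by omega)
    simp only [mem_biUnion, mem_Icc, mem_powersetCard_univ]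
    exact ⟨T.card, ⟨hT.card_pos, hTκ⟩, T, rfl, S, hS, by simpa [event] using hTS⟩
  have hevent : ∀ t, ∀ T ∈ powersetCard t (univ : Finset κ),
      ∀ S ∈ powersetCard (t + r - 1) (univ : Finset β),
      (event T S).dens =
        (((t + r - 1 : ℕ) : ℚ≥0) / Fintype.card β) ^ (Fintype.card ι * t) := by
    intro t T hT S hS
    rw [mem_powersetCard_univ] at hT hS
    rw [dens_filter_forall_forall_apply_mem, dens, hT, hS]
  refine (dens_le_dens hcover).trans <| dens_biUnion_le.trans <| sum_le_sum fun t _ => ?_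
  refine dens_biUnion_le.trans <| (sum_le_sum fun T _ => dens_biUnion_le).trans_eq ?_
  rw [sum_congr rfl fun T hT => sum_congr rfl (hevent t T hT)]
  simp only [sum_const, card_powersetCard, card_univ, nsmul_eq_mul]
  ring

end Sampling

lemma Nat.choose_mul_div_pow_le_exp (n s : ℕ) :
    (n.choose s : ℝ) * ((s : ℝ) / n) ^ s ≤ exp s := by
  calc (n.choose s : ℝ) * ((s : ℝ) / n) ^ s
      ≤ (n : ℝ) ^ s / s.factorial * ((s : ℝ) / n) ^ s := by
        gcongr; exact Nat.choose_le_pow_div s n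
    _ = (n * (s / n) : ℝ) ^ s / s.factorial := by ring
    _ ≤ (s : ℝ) ^ s / s.factorial := by
        gcongr
        rcases n.eq_zero_or_pos with rfl | hn
        · simp
        · rw [mul_div_cancel₀ _ (by positivity)]
    _ ≤ exp s := pow_div_factorial_le_exp _ (by positivity) s

lemma seven_div_twelve_le_exp_neg_half : (7 / 12 : ℝ) ≤ exp (-(1 / 2)) := by
  have hsq : exp (1 / 2) * exp (1 / 2) = exp 1 := by rw [← exp_add]; norm_num
  have : exp (1 / 2) ≤ 12 / 7 := by nlinarith [exp_pos (1 / 2), exp_one_lt_d9]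
  rw [exp_neg, le_inv_comm₀ (by norm_num) (exp_pos _)]
  linarith

lemma choose_mul_choose_mul_div_pow_le_of_small {N n t s r' l : ℕ} (hN : N ≤ n) (ht : 1 ≤ t)
    (hs : s + 1 = t + r') (hl : 6 * r' < l) (hsn : 12 * s ≤ 7 * n) :
    (N.choose t : ℝ) * n.choose s * ((s : ℝ) / n) ^ (l * t) ≤
      (n * exp (3 / 2 - l / 4)) ^ t := by
  have hsl : s ≤ l * t := by nlinarith
  have hx : (s : ℝ) / n ≤ exp (-(1 / 2)) := by
    refine le_trans ?_ seven_div_twelve_le_exp_neg_half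
    rcases n.eq_zero_or_pos with rfl | hn
    · norm_num
    · rw [div_le_iff₀ (by positivity)]
      have : (12 * s : ℝ) ≤ 7 * n := by exact_mod_cast hsn
      linarith
  have hexponent : (s : ℝ) + (l * t - s : ℕ) * (-(1 / 2)) ≤ t * (3 / 2 - l / 4) := by
    have hsr : (s : ℝ) + 1 = t + r' := by exact_mod_cast hs
    have hlr : (6 * r' : ℝ) + 1 ≤ l := by exact_mod_cast hl
    have htl : (l : ℝ) ≤ l * t := le_mul_of_one_le_right (by positivity) (by exact_mod_cast ht)
    push_cast [hsl]
    linarith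
  calc (N.choose t : ℝ) * n.choose s * ((s : ℝ) / n) ^ (l * t)
      = N.choose t * (n.choose s * ((s : ℝ) / n) ^ s) * ((s : ℝ) / n) ^ (l * t - s) := by
        rw [← pow_mul_pow_sub _ hsl]; ring
    _ ≤ n ^ t * exp s * exp (-(1 / 2)) ^ (l * t - s) := by
        gcongr
        · exact_mod_cast (N.choose_le_pow t).trans (Nat.pow_le_pow_left hN t)
        · exact n.choose_mul_div_pow_le_exp s
    _ = n ^ t * exp (s + (l * t - s : ℕ) * (-(1 / 2))) := by
        rw [← exp_nat_mul, mul_assoc, ← exp_add]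
    _ ≤ n ^ t * exp (t * (3 / 2 - l / 4)) := by gcongr
    _ = (n * exp (3 / 2 - l / 4)) ^ t := by rw [mul_pow, exp_nat_mul]

lemma choose_mul_choose_mul_div_pow_le_of_large {N n t s r' l : ℕ} (hN : N + r' = n)
    (ht : t ≤ N) (hs : s + 1 = t + r') (htn : 5 * n ≤ 12 * t) :
    (N.choose t : ℝ) * n.choose s * ((s : ℝ) / n) ^ (l * t) ≤
      (n ^ 2 * exp (-(5 / 12 * l))) ^ (n - s) := by
  set m := n - s
  have hn : 0 < n := by omega
  have hsm : (s : ℝ) + m = n := by norm_cast; omega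
  have hchooseN : (N.choose t : ℝ) ≤ n ^ m := by
    rw [← Nat.choose_symm ht]
    exact_mod_cast (N.choose_le_pow _).trans <|
      (Nat.pow_le_pow_left (by omega) _).trans (Nat.pow_le_pow_right hn (by omega))
  have hchoose : (n.choose s : ℝ) ≤ n ^ m := by
    rw [← Nat.choose_symm (by omega : s ≤ n)]
    exact_mod_cast n.choose_le_pow _
  have hx : (s : ℝ) / n ≤ exp (-(m / n)) := by
    have : (s : ℝ) / n = 1 - m / n := by field_simp; linarith
    rw [this]
    linarith [add_one_le_exp (-(m / n : ℝ))]
  have hexponent : ((l * t : ℕ) : ℝ) * -(m / n) ≤ m * -(5 / 12 * l) := by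
    have htn' : (5 / 12 : ℝ) ≤ t / n := by
      rw [le_div_iff₀ (by positivity)]
      have : (5 * n : ℝ) ≤ 12 * t := by exact_mod_cast htn
      linarith
    have : (l * m : ℝ) * (5 / 12) ≤ l * m * (t / n) := by gcongr
    push_cast
    field_simp at this ⊢
    linarith
  calc (N.choose t : ℝ) * n.choose s * ((s : ℝ) / n) ^ (l * t)
      ≤ n ^ m * n ^ m * exp (-(m / n)) ^ (l * t) := by gcongr
    _ = n ^ m * n ^ m * exp (((l * t : ℕ) : ℝ) * -(m / n)) := by rw [exp_nat_mul]
    _ ≤ n ^ m * n ^ m * exp (m * -(5 / 12 * l)) := by gcongr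
    _ = (n ^ 2 * exp (-(5 / 12 * l))) ^ m := by rw [exp_nat_mul]; ring

lemma choose_mul_choose_mul_div_pow_le_s10 {N n t s r' l : ℕ} (hN : N + r' = n) (hr' : 6 * r' ≤ n)
    (ht1 : 1 ≤ t) (ht : t ≤ N) (hs : s + 1 = t + r') (hl : 6 * r' < l)
    (hη : n ^ 2 * exp (3 / 2 - l / 4) ≤ 1) :
    (N.choose t : ℝ) * n.choose s * ((s : ℝ) / n) ^ (l * t) ≤
      n ^ 2 * exp (3 / 2 - l / 4) := by
  have hn : (1 : ℝ) ≤ n := by norm_cast; omega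
  rcases lt_or_ge (12 * t) (5 * n) with hsmall | hlarge
  · have hbase : (n : ℝ) * exp (3 / 2 - l / 4) ≤ n ^ 2 * exp (3 / 2 - l / 4) := by
      gcongr; exact le_self_pow₀ hn two_ne_zero
    calc _ ≤ ((n : ℝ) * exp (3 / 2 - l / 4)) ^ t :=
          choose_mul_choose_mul_div_pow_le_of_small (by omega) ht1 hs hl (by omega)
      _ ≤ n * exp (3 / 2 - l / 4) := pow_le_of_le_one (by positivity) (hbase.trans hη) (by omega)
      _ ≤ n ^ 2 * exp (3 / 2 - l / 4) := hbase
  · have hbase : (n : ℝ) ^ 2 * exp (-(5 / 12 * l)) ≤ n ^ 2 * exp (3 / 2 - l / 4) := by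
      gcongr; linarith [(Nat.cast_nonneg l : (0 : ℝ) ≤ l)]
    calc _ ≤ ((n : ℝ) ^ 2 * exp (-(5 / 12 * l))) ^ (n - s) :=
          choose_mul_choose_mul_div_pow_le_of_large hN ht hs hlarge
      _ ≤ n ^ 2 * exp (-(5 / 12 * l)) :=
          pow_le_of_le_one (by positivity) (hbase.trans hη) (by omega)
      _ ≤ n ^ 2 * exp (3 / 2 - l / 4) := hbase

lemma sum_choose_mul_choose_mul_div_pow_le_s10 {n r' l : ℕ} (hr' : 6 * r' ≤ n) (hl : 6 * r' < l)
    (hη : n ^ 2 * exp (3 / 2 - l / 4) ≤ 1) :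
    ∑ t ∈ Icc 1 (n - r'), ((n - r').choose t : ℝ) * n.choose (t + r' - 1) *
      (((t + r' - 1 : ℕ) : ℝ) / n) ^ (l * t) ≤ n ^ 3 * exp (3 / 2 - l / 4) := by
  calc _ ≤ ∑ t ∈ Icc 1 (n - r'), (n : ℝ) ^ 2 * exp (3 / 2 - l / 4) := by
        refine sum_le_sum fun t ht => ?_
        rw [mem_Icc] at ht
        exact choose_mul_choose_mul_div_pow_le_s10 (by omega) hr' ht.1 ht.2 (by omega) hl hη
    _ = (n - r' : ℕ) * (n ^ 2 * exp (3 / 2 - l / 4)) := by simp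
    _ ≤ n * (n ^ 2 * exp (3 / 2 - l / 4)) := by gcongr; omega
    _ = n ^ 3 * exp (3 / 2 - l / 4) := by ring

lemma pow_three_mul_mul_exp_le {n r l : ℕ} {ε : ℝ} (hn : 0 < n) (hr : 0 < r) (hε0 : 0 < ε)
    (hε1 : ε < 1) (hl : 27 * log (n / ε) + 9 * log (2 * r / ε) + 18 < l) :
    n ^ 3 * r * exp (3 / 2 - l / 4) ≤ ε := by
  have hlogn : 0 ≤ log n := log_nonneg (by exact_mod_cast hn)
  have hlogr : 0 ≤ log r := log_nonneg (by exact_mod_cast hr)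
  have hlogε : log ε ≤ 0 := log_nonpos hε0.le hε1.le
  rw [log_div (by positivity) hε0.ne', log_div (by positivity) hε0.ne',
    log_mul two_ne_zero (by positivity)] at hl
  calc (n : ℝ) ^ 3 * r * exp (3 / 2 - l / 4)
      = exp (log (n ^ 3 * r) + (3 / 2 - l / 4)) := by rw [exp_add, exp_log (by positivity)]
    _ ≤ exp (log ε) := by
        gcongr
        rw [log_mul (by positivity) (by positivity), log_pow]
        push_cast
        linarith [log_pos one_lt_two]
    _ = ε := exp_log hε0

theorem stmt10 (j i : ℕ)
    (hi1 : 1 ≤ i) (hij : i ≤ j)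
    (n ri' r l : ℕ) (hn0 : 0 < n) (hr0 : 0 < r)
    (ε : ℝ) (hε0 : 0 < ε) (hε1 : ε < 1)
    (hri'n : (ri' : ℝ) ≤ (n : ℝ) / 6)
    (hlb : (l : ℝ) >
      max (27 * Real.log (n / ε) + 9 * Real.log (2 * r / ε) + 18) (6 * ri')) :
    1 - ε / r ≤
      (Nat.card {ω : Fin (n - ri') → Fin l → (Fin j → Fin n) //
          ∀ T : Finset (Fin (n - ri')), T.Nonempty →
            T.card + ri' ≤
              ((T.biUnion fun c => Finset.univ.image (ω c)).image
                (fun v => v ⟨i - 1, by omega⟩)).card} : ℝ) /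
        (Fintype.card (Fin (n - ri') → Fin l → (Fin j → Fin n)) : ℝ) := by
  have : NeZero n := ⟨hn0.ne'⟩
  have hri' : 6 * ri' ≤ n := by
    have : (6 * ri' : ℝ) ≤ n := by linarith
    exact_mod_cast this
  have hl : 6 * ri' < l := by exact_mod_cast (le_max_right _ _).trans_lt hlb
  have hη := pow_three_mul_mul_exp_le hn0 hr0 hε0 hε1 ((le_max_left _ _).trans_lt hlb)
  have hη1 : (n : ℝ) ^ 2 * exp (3 / 2 - l / 4) ≤ 1 := by
    refine le_trans ?_ (hη.trans hε1.le)
    have hn : (1 : ℝ) ≤ n := by exact_mod_cast hn0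
    gcongr
    calc (n : ℝ) ^ 2 ≤ n ^ 3 := pow_le_pow_right₀ hn (by norm_num)
      _ ≤ n ^ 3 * r := le_mul_of_one_le_right (by positivity) (by exact_mod_cast hr0)
  have hbad := dens_filter_not_forall_card_add_le_card_observedCoords_le (κ := Fin (n - ri'))
    (ι := Fin l) (β := Fin n) (⟨i - 1, by omega⟩ : Fin j) ri'
    (by simp only [Fintype.card_fin]; omega)
  simp only [Fintype.card_fin] at hbad
  refine one_sub_le_card_subtype_div_card _ ?_
  calc _ ≤ ∑ t ∈ Icc 1 (n - ri'), ((n - ri').choose t : ℝ) * n.choose (t + ri' - 1) *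
        (((t + ri' - 1 : ℕ) : ℝ) / n) ^ (l * t) := by
        refine (NNRat.cast_le.2 hbad).trans_eq ?_
        simp only [NNRat.cast_sum, NNRat.cast_mul, NNRat.cast_pow, NNRat.cast_div,
          NNRat.cast_natCast]
    _ ≤ n ^ 3 * exp (3 / 2 - l / 4) := sum_choose_mul_choose_mul_div_pow_le_s10 hri' hl hη1
    _ ≤ ε / r := by rw [le_div_iff₀ (by positivity)]; linarith
end

section
/- Let d ≥ 2, let n1,…,nd be positive integers, and let r0 = rd = 1 and r1,…,r_{d−1} be positive integers. Consider the multivariate polynomial ring over ℝ in the variables u^{(i)}_{k,x,k'} indexed by i ∈ {1,…,d}, k ∈ {1,…,r_{i−1}}, x ∈ {1,…,n_i}, k' ∈ {1,…,r_i}. For each multi-index x = (x1,…,xd) with x_i ∈ {1,…,n_i}, define the polynomial p_x := Σ_{k1=1}^{r1} ⋯ Σ_{k_{d−1}=1}^{r_{d−1}} ∏_{i=1}^{d} u^{(i)}_{k_{i−1}, x_i, k_i} (with k0 = kd = 1). Let S be a finite set of multi-indices. If the family (p_x)_{x ∈ S} is algebraically independent over ℝ, then |S| ≤ Σ_{i=1}^{d}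 r_{i−1}·r_i·m_i(S), where m_i(S) := |{x_i : x ∈ S}| is the number of distinct values of the i-th coordinate appearing in S. -/
/-!
Each `p x` only involves the variables `u^{(i)}_{k, v, k'}` whose middle index `v` is one of the
`m_i(S)` values of the `i`-th coordinate occurring in `S`, so the whole family lies in the
polynomial subalgebra on those `∑ i, r_{i-1} r_i m_i(S)` variables. That subalgebra is a
polynomial ring, whose transcendence degree is its number of variables, and an algebraically
independent family cannot be larger than the transcendence degree.
-/

open MvPolynomial Cardinal

universe u v w

theorem AlgebraicIndependent.lift_cardinalMk_le_of_mem_supported {R : Type u} {σ : Type v}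
    {ι : Type w} [CommRing R] [IsDomain R] {f : ι → MvPolynomial σ R}
    (hf : AlgebraicIndependent R f) {s : Set σ} (hs : ∀ i, f i ∈ supported R s) :
    lift.{max u v} #ι ≤ lift.{max u w} #s := by
  have hsupp : AlgebraicIndependent R (fun i => (⟨f i, hs i⟩ : supported R s)) :=
    AlgebraicIndependent.of_comp (supported R s).val hf
  simpa [(supportedEquivMvPolynomial s).trdeg_eq] using hsupp.lift_cardinalMk_le_trdeg

theorem stmt19_general (d : ℕ) (n r : ℕ → ℕ)
    (S : Finset ((t : Fin d) → Fin (n ((t : ℕ) + 1))))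
    (hind : AlgebraicIndependent ℝ (fun x : {y // y ∈ S} =>
      ∑ k : (t : Fin (d + 1)) → Fin (r (t : ℕ)), ∏ t : Fin d,
        (MvPolynomial.X
          ⟨t, (k ⟨(t : ℕ), Nat.lt_succ_of_lt t.isLt⟩, x.1 t,
            k ⟨(t : ℕ) + 1, Nat.succ_lt_succ t.isLt⟩)⟩ :
          MvPolynomial
            ((i : Fin d) × (Fin (r (i : ℕ)) × Fin (n ((i : ℕ) + 1)) ×
              Fin (r ((i : ℕ) + 1)))) ℝ))) :
    S.card ≤ ∑ i : Fin d,
      r (i : ℕ) * r ((i : ℕ) + 1) * (S.image (fun x => x i)).card := by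
  set vars := Finset.univ.sigma fun i : Fin d =>
    (Finset.univ : Finset (Fin (r i))) ×ˢ S.image (fun x => x i) ×ˢ
      (Finset.univ : Finset (Fin (r (i + 1))))
  have hcard_le := hind.lift_cardinalMk_le_of_mem_supported (s := ↑vars) fun x =>
    Subalgebra.sum_mem _ fun k _ => Subalgebra.prod_mem _ fun t _ =>
      X_mem_supported.mpr (by simpa [vars] using ⟨x.1, x.2, rfl⟩)
  have hcard : vars.card = ∑ i : Fin d,
      r (i : ℕ) * r ((i : ℕ) + 1) * (S.image (fun x => x i)).card := by
    simp only [vars, Finset.card_sigma, Finset.card_product, Finset.card_univ, Fintype.card_fin]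
    exact Finset.sum_congr rfl fun i _ => by ring
  rw [← hcard]
  simpa using hcard_le

/-- The variable-counting core of Lemma 5: in the polynomial ring over `ℝ` with variables
`u^{(i)}_{k,x,k'}` (indexed by the sigma type `(i : Fin d) × (Fin (r i) × Fin (n (i+1)) ×
Fin (r (i+1)))`, with `r 0 = r d = 1`), associate to each multi-index `x` the polynomial
`p x = Σ_{k} ∏_{t} u^{(t)}_{k_t, x_t, k_{t+1}}` of the TT decomposition. If the family
`(p x)_{x ∈ S}` is algebraically independent over `ℝ`, then
`|S| ≤ Σ_{i} r_{i−1}·r_i·m_i(S)`, where `m_i(S)` is the number of distinct values of the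
`i`-th coordinate appearing in `S`. -/
theorem stmt19 (d : ℕ) (hd : 2 ≤ d) (n r : ℕ → ℕ)
    (hn : ∀ i, 1 ≤ i → i ≤ d → 0 < n i)
    (hrpos : ∀ i, i ≤ d → 0 < r i) (hr0 : r 0 = 1) (hrd : r d = 1)
    (S : Finset ((t : Fin d) → Fin (n ((t : ℕ) + 1))))
    (hind : AlgebraicIndependent ℝ (fun x : {y // y ∈ S} =>
      ∑ k : (t : Fin (d + 1)) → Fin (r (t : ℕ)), ∏ t : Fin d,
        (MvPolynomial.X
          ⟨t, (k ⟨(t : ℕ), Nat.lt_succ_of_lt t.isLt⟩, x.1 t,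
            k ⟨(t : ℕ) + 1, Nat.succ_lt_succ t.isLt⟩)⟩ :
          MvPolynomial
            ((i : Fin d) × (Fin (r (i : ℕ)) × Fin (n ((i : ℕ) + 1)) ×
              Fin (r ((i : ℕ) + 1)))) ℝ))) :
    S.card ≤ ∑ i : Fin d,
      r (i : ℕ) * r ((i : ℕ) + 1) * (S.image (fun x => x i)).card :=
  stmt19_general d n r S hind
end
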